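/- Let γ ∈ ℚ with v₂(γ) ≥ 0 (i.e., γ is 2-integral), and tᵢ(x) ∈ ℚ[x] defined by t₁(x) = x + γ, tᵢ(x) = (tᵢ₋₁(x) - γ)² + x + γ. Then tᵢ(x) is separable for all i ≥ 1. -/

import Mathlib

/-!
Every `tᵢ` is monic with 2-integral coefficients, and `tᵢ' = 1 + 2 (tᵢ₋₁ - γ) tᵢ₋₁'` is `≡ 1`
modulo 2. A common root `α` of `tᵢ` and `tᵢ'` in an algebraic closure of `ℚ₂` would be integral
over `ℤ₂`, hence so would be `u = ((tᵢ' - 1) / 2)(α)`; but `2u + 1 = 0`, and `-1/2` is not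
integral over the integrally closed ring `ℤ₂`.
-/

open Polynomial

/-- `tpoly γ i` is the polynomial `t_{i+1}` of the paper. -/
noncomputable def tpoly {K : Type*} [Field K] (γ : K) : ℕ → K[X]
  | 0 => Polynomial.X + Polynomial.C γ
  | i + 1 => (tpoly γ i - Polynomial.C γ) ^ 2 + Polynomial.X + Polynomial.C γ

theorem IsIntegrallyClosed.isUnit_of_isIntegral_of_mul_eq_one {R K L : Type*} [CommRing R]
    [Field K] [Algebra R K] [IsFractionRing R K] [IsIntegrallyClosed R] [Field L] [Algebra R L]
    [Algebra K L] [IsScalarTower R K L] {c : R} {x : L} (hx : IsIntegral R x)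
    (hcx : algebraMap R L c * x = 1) : IsUnit c := by
  have hc0 : algebraMap R K c ≠ 0 := fun h => by
    simp [IsScalarTower.algebraMap_apply R K L, h] at hcx
  have hx_eq : x = algebraMap K L (algebraMap R K c)⁻¹ := by
    rw [map_inv₀, ← IsScalarTower.algebraMap_apply]
    exact eq_inv_of_mul_eq_one_right hcx
  rw [hx_eq, isIntegral_algebraMap_iff (algebraMap K L).injective,
    IsIntegrallyClosed.isIntegral_iff] at hx
  obtain ⟨y, hy⟩ := hx
  exact IsUnit.of_mul_eq_one y
    (IsFractionRing.injective R K (by rw [map_mul, hy, mul_inv_cancel₀ hc0, map_one]))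

namespace Polynomial

theorem separable_map_of_dvd_derivative_sub_one {R K : Type*} [CommRing R] [Field K] [Algebra R K]
    [IsFractionRing R K] [IsIntegrallyClosed R] {f : R[X]} {c : R}
    (hf : f.Monic) (hc : ¬IsUnit c) (hdvd : C c ∣ derivative f - 1) :
    (f.map (algebraMap R K)).Separable := by
  let L := AlgebraicClosure K
  refine (separable_def _).2 ((isCoprime_iff_aeval_ne_zero_of_isAlgClosed K L _ _).2 fun a => ?_)
  rw [derivative_map, aeval_map_algebraMap, aeval_map_algebraMap]
  by_contra! ⟨hfa, hf'a⟩
  obtain ⟨Q, hQ⟩ := hdvd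
  have ha : IsIntegral R a := ⟨f, hf, hfa⟩
  have hQa : IsIntegral R (aeval a Q) := by
    rw [← aeval_subalgebra_coe Q (integralClosure R L) ⟨a, ha⟩]
    exact (aeval (⟨a, ha⟩ : integralClosure R L) Q).2
  have hcQ : algebraMap R L c * -aeval a Q = 1 := by
    rw [sub_eq_iff_eq_add] at hQ
    rw [hQ, map_add, map_mul, aeval_C, map_one] at hf'a
    linear_combination -hf'a
  exact hc (IsIntegrallyClosed.isUnit_of_isIntegral_of_mul_eq_one (K := K) hQa.neg hcQ)

variable {R : Type*} [CommRing R]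

/-- The recursion of `tpoly` over a commutative ring such as `ℤ_[2]`, where `tpoly` is not
available. -/
noncomputable def tpolyRing (γ : R) : ℕ → R[X]
  | 0 => X + C γ
  | i + 1 => (tpolyRing γ i - C γ) ^ 2 + X + C γ

theorem tpoly_eq_tpolyRing {K : Type*} [Field K] (γ : K) : ∀ i, tpoly γ i = tpolyRing γ i
  | 0 => rfl
  | i + 1 => by rw [tpoly, tpolyRing, tpoly_eq_tpolyRing γ i]

theorem map_tpolyRing {S : Type*} [CommRing S] (f : R →+* S) (γ : R) :
    ∀ i, (tpolyRing γ i).map f = tpolyRing (f γ) i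
  | 0 => by simp [tpolyRing]
  | i + 1 => by simp [tpolyRing, map_tpolyRing f γ i]

theorem monic_tpolyRing_and_natDegree [Nontrivial R] (γ : R) :
    ∀ i, (tpolyRing γ i).Monic ∧ (tpolyRing γ i).natDegree = 2 ^ i
  | 0 => ⟨monic_X_add_C γ, natDegree_X_add_C γ⟩
  | i + 1 => by
    obtain ⟨hmon, hdeg⟩ := monic_tpolyRing_and_natDegree γ i
    have hmon_sub : (tpolyRing γ i - C γ).Monic :=
      hmon.sub_of_left <| degree_C_le.trans_lt <|
        natDegree_pos_iff_degree_pos.1 (by rw [hdeg]; positivity)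
    have hdeg_sq : ((tpolyRing γ i - C γ) ^ 2).natDegree = 2 ^ (i + 1) := by
      rw [hmon_sub.natDegree_pow, natDegree_sub_C, hdeg, pow_succ, mul_comm]
    have hlt : (X + C γ).degree < ((tpolyRing γ i - C γ) ^ 2).degree := by
      refine degree_lt_degree ?_
      rw [natDegree_X_add_C, hdeg_sq]
      exact Nat.one_lt_two_pow (by omega)
    rw [tpolyRing, add_assoc]
    exact ⟨(hmon_sub.pow 2).add_of_left hlt,
      by rw [natDegree_add_eq_left_of_degree_lt hlt, hdeg_sq]⟩

theorem C_two_dvd_derivative_tpolyRing_sub_one (γ : R) :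
    ∀ i, C 2 ∣ derivative (tpolyRing γ i) - 1
  | 0 => by simp [tpolyRing]
  | i + 1 => ⟨(tpolyRing γ i - C γ) * derivative (tpolyRing γ i), by
      simp only [tpolyRing, derivative_add, derivative_pow, derivative_sub, derivative_X, derivative_C,
        Nat.add_one_sub_one, pow_one, Nat.cast_ofNat]
      ring⟩

end Polynomial

theorem stmt_12 (γ : ℚ) (hγ : 0 ≤ padicValRat 2 γ) (i : ℕ) :
    (tpoly γ i).Separable := by
  have hγ_int : ‖(γ : ℚ_[2])‖ ≤ 1 := by
    rwa [Padic.norm_le_one_iff_val_nonneg, Padic.valuation_ratCast]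
  let g : ℤ_[2] := ⟨γ, hγ_int⟩
  have hmap : (tpoly γ i).map (algebraMap ℚ ℚ_[2]) =
      (tpolyRing g i).map (algebraMap ℤ_[2] ℚ_[2]) := by
    rw [tpoly_eq_tpolyRing, map_tpolyRing, map_tpolyRing]
    rfl
  rw [← separable_map (algebraMap ℚ ℚ_[2]), hmap]
  exact separable_map_of_dvd_derivative_sub_one (monic_tpolyRing_and_natDegree g i).1
    (by simpa using PadicInt.p_nonunit (p := 2)) (C_two_dvd_derivative_tpolyRing_sub_one g i)
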